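/- arXiv:0812.2754 — 2 statements merged into one kernel-verified Lean document; each statement's English description precedes it below -/
import Mathlib

section
/- Let A be a real n×n matrix with all eigenvalues in Re λ > 0, and suppose there exist C > 0 and γ > 0 such that ‖t^A x‖ ≤ C t^γ ‖x‖ for all x ∈ ℝⁿ and 0 < t ≤ 1. Conversely, if such constants C, γ exist for a real matrix A, then all eigenvalues of A have positive real part. -/
open MeasureTheory Matrix Real Set Filter Topology

noncomputable section

/-- `t^A := exp((log t) • A)` for a real square matrix `A` and `t > 0`. -/
def texp {n : ℕ} (A : Matrix (Fin n) (Fin n) ℝ) (t : ℝ) : Matrix (Fin n) (Fin n) ℝ :=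
  NormedSpace.exp ((Real.log t) • A)

/-- Action of a matrix on Euclidean space. -/
def mApply {n : ℕ} (M : Matrix (Fin n) (Fin n) ℝ) (x : EuclideanSpace ℝ (Fin n)) :
    EuclideanSpace ℝ (Fin n) := WithLp.toLp 2 (M.mulVec x)

/-- `A ∈ M⁺(n,ℝ)`: every (complex) eigenvalue of `A` has positive real part. -/
def PosEigen {n : ℕ} (A : Matrix (Fin n) (Fin n) ℝ) : Prop :=
  ∀ μ ∈ spectrum ℂ (A.map (Complex.ofReal)), 0 < μ.re

/-- The lattice point `ω ∈ ℤⁿ` viewed as a vector of `ℝⁿ`. -/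
def latt {n : ℕ} (ω : Fin n → ℤ) : EuclideanSpace ℝ (Fin n) := WithLp.toLp 2 (fun i => (ω i : ℝ))

/-- `φ` is `A`-homogeneous: `φ(t^A x) = t·φ(x)` for all `t > 0` and all `x`. -/
def Homog {n : ℕ} (A : Matrix (Fin n) (Fin n) ℝ) (φ : EuclideanSpace ℝ (Fin n) → ℝ) : Prop :=
  ∀ t : ℝ, 0 < t → ∀ x : EuclideanSpace ℝ (Fin n), φ (mApply (texp A t) x) = t * φ x

/-- Partial derivative in the `j`-th coordinate direction. -/
def pd {n : ℕ} (j : Fin n) (f : EuclideanSpace ℝ (Fin n) → ℝ)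
    (x : EuclideanSpace ℝ (Fin n)) : ℝ :=
  fderiv ℝ f x (EuclideanSpace.single j 1)

/-- Membership in the decay space `S_σ^τ(ℝⁿ)`: `g` is continuous,
`|g(x)|(1+‖x‖^σ)` is bounded and `|ĝ(y)|(1+‖y‖^τ)` is bounded. -/
def SDecay {n : ℕ} (σ τ : ℝ) (g : EuclideanSpace ℝ (Fin n) → ℂ) : Prop :=
  Continuous g ∧ (∃ C : ℝ, ∀ x, ‖g x‖ * (1 + ‖x‖ ^ σ) ≤ C) ∧
    (∃ C : ℝ, ∀ y, ‖VectorFourier.fourierIntegral Real.fourierChar volume (innerₗ (EuclideanSpace ℝ (Fin n))) g y‖ * (1 + ‖y‖ ^ τ) ≤ C)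

/-- The theta function `Θ*_A(g, it) = Σ_{ω ∈ ℤⁿ \ {0}} g(t^A ω)`. -/
def thetaStar {n : ℕ} (A : Matrix (Fin n) (Fin n) ℝ) (g : EuclideanSpace ℝ (Fin n) → ℂ)
    (t : ℝ) : ℂ :=
  ∑' ω : {v : Fin n → ℤ // v ≠ 0}, g (mApply (texp A t) (latt ω.1))


namespace PosEigenAux

open scoped Matrix.Norms.L2Operator

variable {n : ℕ}

/-- complexification of a real vector -/
def cx (x : EuclideanSpace ℝ (Fin n)) : EuclideanSpace ℂ (Fin n) := WithLp.toLp 2 (fun i => (x i : ℂ))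

/-- a complex vector as an element of Euclidean space -/
def ec (v : Fin n → ℂ) : EuclideanSpace ℂ (Fin n) := WithLp.toLp 2 v

lemma mulVec_map (R : Matrix (Fin n) (Fin n) ℝ) (x : EuclideanSpace ℝ (Fin n)) :
    ec ((R.map Complex.ofReal) *ᵥ (cx x)) = cx (mApply R x) := by
  ext i
  simp [cx, ec, mApply, Matrix.mulVec, dotProduct]

lemma norm_cx (x : EuclideanSpace ℝ (Fin n)) : ‖cx x‖ = ‖x‖ := by
  rw [EuclideanSpace.norm_eq, EuclideanSpace.norm_eq]
  congr 1
  refine Finset.sum_congr rfl fun i _ => ?_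
  simp [cx]

lemma norm_ec_mulVec_le (M : Matrix (Fin n) (Fin n) ℂ) (v : EuclideanSpace ℂ (Fin n)) :
    ‖ec (M *ᵥ v)‖ ≤ ‖M‖ * ‖v‖ :=
  Matrix.l2_opNorm_mulVec M v

lemma norm_mApply_le (R : Matrix (Fin n) (Fin n) ℝ) (x : EuclideanSpace ℝ (Fin n)) :
    ‖mApply R x‖ ≤ ‖R.map Complex.ofReal‖ * ‖x‖ := by
  have h := norm_ec_mulVec_le (R.map Complex.ofReal) (cx x)
  rw [mulVec_map, norm_cx, norm_cx] at h
  exact h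

lemma pow_mulVec_eig {M : Matrix (Fin n) (Fin n) ℂ} {μ : ℂ} {v : Fin n → ℂ}
    (h : M *ᵥ v = μ • v) (k : ℕ) : (M ^ k) *ᵥ v = (μ ^ k) • v := by
  induction k with
  | zero => simp
  | succ k ih =>
      rw [pow_succ', ← Matrix.mulVec_mulVec, ih, Matrix.mulVec_smul, h, smul_smul, ← pow_succ]

lemma exp_mulVec_eig {M : Matrix (Fin n) (Fin n) ℂ} {μ : ℂ} {v : Fin n → ℂ}
    (h : M *ᵥ v = μ • v) :
    (NormedSpace.exp M) *ᵥ v = Complex.exp μ • v := by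
  classical
  let T : Matrix (Fin n) (Fin n) ℂ →ₗ[ℂ] (Fin n → ℂ) :=
    { toFun := fun N => N *ᵥ v
      map_add' := fun N₁ N₂ => Matrix.add_mulVec _ _ _
      map_smul' := fun c N => Matrix.smul_mulVec c N v }
  let T' : Matrix (Fin n) (Fin n) ℂ →L[ℂ] (Fin n → ℂ) := ⟨T, T.continuous_of_finiteDimensional⟩
  have hsum : Summable fun k : ℕ => ((Nat.factorial k : ℂ))⁻¹ • M ^ k :=
    NormedSpace.expSeries_summable' M
  calc (NormedSpace.exp M) *ᵥ v = T' (∑' k : ℕ, ((Nat.factorial k : ℂ))⁻¹ • M ^ k) := by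
        rw [NormedSpace.exp_eq_tsum ℂ]; rfl
  _ = ∑' k : ℕ, T' (((Nat.factorial k : ℂ))⁻¹ • M ^ k) := T'.map_tsum hsum
  _ = ∑' k : ℕ, (((Nat.factorial k : ℂ))⁻¹ * μ ^ k) • v := by
        refine tsum_congr fun k => ?_
        rw [_root_.map_smul]
        show ((Nat.factorial k : ℂ))⁻¹ • ((M ^ k) *ᵥ v) = _
        rw [pow_mulVec_eig h, smul_smul]
  _ = (∑' k : ℕ, ((Nat.factorial k : ℂ))⁻¹ * μ ^ k) • v := by
        refine Summable.tsum_smul_const ?_ v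
        have := NormedSpace.expSeries_summable' (𝕂 := ℂ) μ
        simpa [smul_eq_mul] using this
  _ = Complex.exp μ • v := by
        congr 1
        rw [Complex.exp_eq_exp_ℂ, NormedSpace.exp_eq_tsum ℂ]
        simp [smul_eq_mul]

lemma mem_spectrum_iff_eig {M : Matrix (Fin n) (Fin n) ℂ} {μ : ℂ} :
    μ ∈ spectrum ℂ M ↔ ∃ v : Fin n → ℂ, v ≠ 0 ∧ M *ᵥ v = μ • v := by
  classical
  rw [← AlgEquiv.spectrum_eq (Matrix.toLinAlgEquiv' (R := ℂ) (n := Fin n)) M,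
    ← Module.End.hasEigenvalue_iff_mem_spectrum]
  constructor
  · intro h
    obtain ⟨v, hv⟩ := h.exists_hasEigenvector
    refine ⟨v, hv.2, ?_⟩
    have := hv.apply_eq_smul
    simpa [Matrix.toLinAlgEquiv'_apply, Matrix.toLin'_apply] using this
  · rintro ⟨v, hv0, hv⟩
    have hv' : Module.End.HasEigenvector (Matrix.toLinAlgEquiv' (R := ℂ) (n := Fin n) M) μ v := by
      refine ⟨?_, hv0⟩
      rw [Module.End.mem_eigenspace_iff]
      simpa [Matrix.toLinAlgEquiv'_apply, Matrix.toLin'_apply] using hv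
    exact Module.End.hasEigenvalue_of_hasEigenvector hv'

lemma spectrum_exp_subset {M : Matrix (Fin n) (Fin n) ℂ} {ν : ℂ}
    (hν : ν ∈ spectrum ℂ (NormedSpace.exp M)) :
    ∃ μ ∈ spectrum ℂ M, ν = Complex.exp μ := by
  classical
  obtain ⟨v, hv0, hv⟩ := mem_spectrum_iff_eig.mp hν
  set f : Module.End ℂ (Fin n → ℂ) := Matrix.toLin' M with hf
  set g : Module.End ℂ (Fin n → ℂ) := Matrix.toLin' (NormedSpace.exp M) with hg
  set E : Submodule ℂ (Fin n → ℂ) := Module.End.eigenspace g ν with hE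
  have hvE : v ∈ E := by
    rw [hE, Module.End.mem_eigenspace_iff, hg, Matrix.toLin'_apply, hv]
  have comm : M * NormedSpace.exp M = NormedSpace.exp M * M :=
    (Commute.refl M).exp_right.eq
  have hinv : ∀ u ∈ E, f u ∈ E := by
    intro u hu
    rw [hE, Module.End.mem_eigenspace_iff] at hu ⊢
    have : g (f u) = f (g u) := by
      simp only [hf, hg, Matrix.toLin'_apply, Matrix.mulVec_mulVec]
      rw [← comm]
    rw [this, hu, _root_.map_smul]
  haveI : Nontrivial E := Submodule.nontrivial_iff_ne_bot.mpr (by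
    intro hbot
    rw [hbot] at hvE
    exact hv0 (Submodule.mem_bot ℂ |>.mp hvE))
  let f' : Module.End ℂ E := LinearMap.restrict f hinv
  obtain ⟨μ, hμ⟩ := Module.End.exists_eigenvalue f'
  obtain ⟨w, hw⟩ := hμ.exists_hasEigenvector
  have hw0 : (w : Fin n → ℂ) ≠ 0 := fun h0 => hw.2 (Subtype.ext h0)
  have hMw : M *ᵥ (w : Fin n → ℂ) = μ • (w : Fin n → ℂ) := by
    have := hw.apply_eq_smul
    have h2 : f (w : Fin n → ℂ) = μ • (w : Fin n → ℂ) := by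
      have := congrArg (Subtype.val) this
      exact this
    simpa [hf, Matrix.toLin'_apply] using h2
  refine ⟨μ, mem_spectrum_iff_eig.mpr ⟨w, hw0, hMw⟩, ?_⟩
  have h1 : (NormedSpace.exp M) *ᵥ (w : Fin n → ℂ) = ν • (w : Fin n → ℂ) := by
    have hwE : (w : Fin n → ℂ) ∈ Module.End.eigenspace g ν := w.2
    rw [Module.End.mem_eigenspace_iff] at hwE
    simpa [hg, Matrix.toLin'_apply] using hwE
  have h2 := exp_mulVec_eig hMw
  rw [h1] at h2
  obtain ⟨i, hi⟩ := Function.ne_iff.mp hw0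
  have := congrFun h2 i
  simp only [Pi.smul_apply, smul_eq_mul] at this
  exact mul_right_cancel₀ hi this

lemma one_le_exp' {x : ℝ} (hx : 0 ≤ x) : (1:ℝ) ≤ Real.exp x := by
  rw [← Real.exp_zero]; exact Real.exp_le_exp.mpr hx

lemma main_bound (hn : 0 < n) {M : Matrix (Fin n) (Fin n) ℂ}
    (hspec : ∀ μ ∈ spectrum ℂ M, 0 < μ.re) :
    ∃ C γ : ℝ, 0 < C ∧ 0 < γ ∧ ∀ t : ℝ, 0 < t → t ≤ 1 →
      ‖NormedSpace.exp ((Real.log t) • M)‖ ≤ C * t ^ γ := by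
  haveI : Nonempty (Fin n) := ⟨⟨0, hn⟩⟩
  set B := NormedSpace.exp ((-1 : ℝ) • M) with hB
  have hsr : spectralRadius ℂ B < 1 := by
    refine spectrum.spectralRadius_lt_of_forall_lt B ?_
    intro z hz
    obtain ⟨μ', hμ', hz'⟩ := spectrum_exp_subset (M := (-1 : ℝ) • M) hz
    have hneg : (-1 : ℝ) • M = -M := by rw [neg_one_smul]
    rw [hneg] at hμ'
    have : -μ' ∈ spectrum ℂ M := by
      rw [← spectrum.neg_eq] at hμ'
      simpa using hμ'
    have hre : μ'.re < 0 := by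
      have := hspec _ this
      simp only [Complex.neg_re] at this
      linarith
    have : ‖z‖ < 1 := by
      rw [hz', Complex.norm_exp]
      exact Real.exp_lt_one_iff.mpr hre
    exact_mod_cast this
  obtain ⟨ρ, hρ0', hrρ, hρ1'⟩ := ENNReal.lt_iff_exists_real_btwn.mp hsr
  have hρ1 : ρ < 1 := by
    have := hρ1'
    rw [show (1 : ENNReal) = ENNReal.ofReal 1 by simp] at this
    exact (ENNReal.ofReal_lt_ofReal_iff one_pos).mp this
  have hρ0 : 0 < ρ := by
    rcases lt_or_eq_of_le hρ0' with h | h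
    · exact h
    · exfalso; rw [← h] at hrρ; simp at hrρ
  have hgel := spectrum.pow_nnnorm_pow_one_div_tendsto_nhds_spectralRadius B
  have hev : ∀ᶠ k : ℕ in Filter.atTop,
      ((‖B ^ k‖₊ : ENNReal)) ^ (1 / (k:ℝ)) < ENNReal.ofReal ρ :=
    hgel.eventually (gt_mem_nhds hrρ)
  obtain ⟨N₀, hN₀⟩ := Filter.eventually_atTop.mp hev
  set N : ℕ := max N₀ 1 with hN
  have hpow : ∀ k : ℕ, N ≤ k → ‖B ^ k‖ ≤ ρ ^ k := by
    intro k hk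
    have hk1 : 1 ≤ k := le_trans (le_max_right _ _) hk
    have hkr : (0:ℝ) < k := by exact_mod_cast hk1
    have h1 := hN₀ k (le_trans (le_max_left _ _) hk)
    have h2 : (((‖B ^ k‖₊ : ENNReal)) ^ (1 / (k:ℝ))) ^ (k:ℝ) < (ENNReal.ofReal ρ) ^ (k:ℝ) :=
      ENNReal.rpow_lt_rpow h1 hkr
    rw [← ENNReal.rpow_mul, one_div_mul_cancel (ne_of_gt hkr), ENNReal.rpow_one] at h2
    rw [ENNReal.ofReal_rpow_of_pos hρ0, Real.rpow_natCast] at h2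
    rw [← enorm_eq_nnnorm, ← ofReal_norm] at h2
    exact le_of_lt ((ENNReal.ofReal_lt_ofReal_iff (by positivity)).mp h2)
  have hcont : Continuous fun θ : ℝ => ‖NormedSpace.exp ((-θ) • M)‖ := by
    have h1 : Continuous fun θ : ℝ => (-θ) • M := (continuous_neg.smul continuous_const)
    exact ((continuous_iff_continuousAt.2 fun x => (NormedSpace.exp_analytic (𝕂 := ℂ) x).continuousAt).comp h1).norm
  obtain ⟨θs, hθs, hKmax'⟩ := (isCompact_Icc (a := (0:ℝ)) (b := (N:ℝ)+1)).exists_isMaxOn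
    (Set.nonempty_Icc.mpr (by positivity)) hcont.continuousOn
  have hKmax : ∀ θ ∈ Set.Icc (0:ℝ) ((N:ℝ)+1), ‖NormedSpace.exp ((-θ) • M)‖ ≤
      ‖NormedSpace.exp ((-θs) • M)‖ := fun θ hθ => hKmax' hθ
  set K := ‖NormedSpace.exp ((-θs) • M)‖ with hKdef
  have hK0 : 0 < K := by
    have h0 : (0:ℝ) ∈ Set.Icc (0:ℝ) ((N:ℝ)+1) := Set.mem_Icc.mpr ⟨le_refl _, by positivity⟩
    have := hKmax 0 h0
    have hone : ‖NormedSpace.exp ((-(0:ℝ)) • M)‖ = ‖(1 : Matrix (Fin n) (Fin n) ℂ)‖ := by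
      norm_num [NormedSpace.exp_zero]
    rw [hone] at this
    have : (0:ℝ) < ‖(1 : Matrix (Fin n) (Fin n) ℂ)‖ := norm_pos_iff.mpr one_ne_zero
    linarith [hKmax 0 h0, hone ▸ this]
  set γ : ℝ := -Real.log ρ with hγdef
  have hγ0 : 0 < γ := by
    have := Real.log_neg hρ0 hρ1
    simp only [hγdef]; linarith
  refine ⟨K * Real.exp (γ * ((N:ℝ)+1)), γ, by positivity, hγ0, ?_⟩
  intro t ht ht1
  set s : ℝ := -Real.log t with hsdef
  have hs0 : 0 ≤ s := by
    have := Real.log_nonpos (le_of_lt ht) ht1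
    simp only [hsdef]; linarith
  have hts : Real.log t = -s := by simp [hsdef]
  have htγ : t ^ γ = Real.exp (-(γ * s)) := by
    rw [Real.rpow_def_of_pos ht]
    congr 1
    rw [hts]; ring
  rw [htγ, hts]
  by_cases hcase : s ≤ (N:ℝ)+1
  · have hsI : s ∈ Set.Icc (0:ℝ) ((N:ℝ)+1) := Set.mem_Icc.mpr ⟨hs0, hcase⟩
    have h1 : ‖NormedSpace.exp ((-s) • M)‖ ≤ K := hKmax s hsI
    have h2 : K ≤ K * Real.exp (γ * ((N:ℝ)+1)) * Real.exp (-(γ * s)) := by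
      rw [mul_assoc, ← Real.exp_add]
      refine le_mul_of_one_le_right (le_of_lt hK0) (one_le_exp' ?_)
      have : γ * s ≤ γ * ((N:ℝ)+1) :=
        mul_le_mul_of_nonneg_left hcase (le_of_lt hγ0)
      linarith
    exact le_trans h1 h2
  · push_neg at hcase
    set k : ℕ := ⌊s⌋₊ with hkdef
    have hk1 : (k:ℝ) ≤ s := Nat.floor_le hs0
    have hk2 : s < (k:ℝ) + 1 := Nat.lt_floor_add_one s
    have hkN : N ≤ k := by
      have : (N:ℝ) < (k:ℝ) + 1 := by linarith
      have : (N:ℝ) ≤ (k:ℝ) := by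
        have := Nat.lt_succ_iff.mp (by exact_mod_cast this : N < k + 1)
        exact_mod_cast this
      exact_mod_cast this
    set θ : ℝ := s - k with hθdef
    have hθI : θ ∈ Set.Icc (0:ℝ) ((N:ℝ)+1) := by
      constructor
      · simp only [hθdef]; linarith
      · simp only [hθdef]
        have : (0:ℝ) ≤ (N:ℝ) := Nat.cast_nonneg N
        linarith
    have hdecomp : NormedSpace.exp ((-s) • M) = NormedSpace.exp ((-θ) • M) * B ^ k := by
      have hsum : (-s) • M = (-θ) • M + (-(k:ℝ)) • M := by
        rw [← add_smul]
        congr 1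
        simp only [hθdef]; ring
      have hcomm : Commute ((-θ) • M) ((-(k:ℝ)) • M) :=
        ((Commute.refl M).smul_left _).smul_right _
      rw [hsum, Matrix.exp_add_of_commute _ _ hcomm]
      congr 1
      have : (-(k:ℝ)) • M = k • ((-1:ℝ) • M) := by
        rw [← Nat.cast_smul_eq_nsmul ℝ k ((-1:ℝ) • M), smul_smul]
        congr 1; ring
      rw [this, Matrix.exp_nsmul]
    rw [hdecomp]
    calc ‖NormedSpace.exp ((-θ) • M) * B ^ k‖
        ≤ ‖NormedSpace.exp ((-θ) • M)‖ * ‖B ^ k‖ := norm_mul_le _ _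
    _ ≤ K * ρ ^ k :=
        mul_le_mul (hKmax θ hθI) (hpow k hkN) (norm_nonneg _) (le_of_lt hK0)
    _ ≤ K * Real.exp (γ * ((N:ℝ)+1)) * Real.exp (-(γ * s)) := by
        have hρk : ρ ^ k = Real.exp (-(γ * k)) := by
          rw [← Real.exp_log (show (0:ℝ) < ρ ^ k by positivity), Real.log_pow]
          congr 1
          simp only [hγdef]; ring
        rw [hρk, mul_assoc, ← Real.exp_add]
        refine mul_le_mul_of_nonneg_left ?_ (le_of_lt hK0)
        rw [Real.exp_le_exp]
        have hγN : γ * 1 ≤ γ * ((N:ℝ)+1) := by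
          refine mul_le_mul_of_nonneg_left ?_ (le_of_lt hγ0)
          have : (0:ℝ) ≤ (N:ℝ) := Nat.cast_nonneg N
          linarith
        have : γ * (s - 1) ≤ γ * k := mul_le_mul_of_nonneg_left (by linarith) (le_of_lt hγ0)
        nlinarith

lemma map_smul_ofReal (r : ℝ) (A : Matrix (Fin n) (Fin n) ℝ) :
    (r • A).map Complex.ofReal = r • (A.map Complex.ofReal) := by
  ext i j
  simp [Matrix.map_apply, Complex.real_smul]

lemma real_smul_matrix (r : ℝ) (M : Matrix (Fin n) (Fin n) ℂ) : r • M = (r : ℂ) • M := by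
  ext i j
  simp [Complex.real_smul]

lemma continuous_map_ofReal :
    Continuous fun R : Matrix (Fin n) (Fin n) ℝ => R.map Complex.ofReal := by
  refine continuous_matrix fun i j => ?_
  exact Complex.continuous_ofReal.comp ((continuous_apply j).comp (continuous_apply i))

lemma map_texp (A : Matrix (Fin n) (Fin n) ℝ) (t : ℝ) :
    (texp A t).map Complex.ofReal =
      NormedSpace.exp ((Real.log t) • (A.map Complex.ofReal)) := by
  have h0 : (texp A t).map Complex.ofReal =
      (Complex.ofRealHom.mapMatrix : Matrix (Fin n) (Fin n) ℝ →+* Matrix (Fin n) (Fin n) ℂ)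
        (NormedSpace.exp ((Real.log t) • A)) := rfl
  rw [h0, NormedSpace.map_exp_of_mem_ball (𝕂 := ℝ) _ (by exact continuous_map_ofReal) ((Real.log t) • A)
    (by rw [NormedSpace.expSeries_radius_eq_top]; exact edist_lt_top _ _)]
  have h1 : (Complex.ofRealHom.mapMatrix : Matrix (Fin n) (Fin n) ℝ →+* Matrix (Fin n) (Fin n) ℂ)
      ((Real.log t) • A) = (Real.log t) • (A.map Complex.ofReal) := by
    rw [RingHom.mapMatrix_apply]
    exact map_smul_ofReal _ _
  rw [h1]

lemma norm_sq_cx_add_smul (u v : EuclideanSpace ℝ (Fin n)) :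
    ‖cx u + Complex.I • cx v‖ ^ 2 = ‖u‖ ^ 2 + ‖v‖ ^ 2 := by
  rw [EuclideanSpace.norm_eq, EuclideanSpace.norm_eq, EuclideanSpace.norm_eq]
  rw [Real.sq_sqrt (by positivity), Real.sq_sqrt (by positivity), Real.sq_sqrt (by positivity),
    ← Finset.sum_add_distrib]
  refine Finset.sum_congr rfl fun i _ => ?_
  have : (cx u + Complex.I • cx v) i = Complex.I • (v i : ℂ) + (u i : ℂ) := by
    simp [cx]; ring
  rw [this]
  simp only [smul_eq_mul]
  rw [mul_comm]
  rw [show ((v i : ℂ)) * Complex.I + (u i : ℂ) = (u i : ℂ) + (v i : ℂ) * Complex.I by ring]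
  rw [Complex.norm_add_mul_I]
  rw [Real.sq_sqrt (by positivity)]
  simp [Real.norm_eq_abs, sq_abs]

lemma decomp_w (w : EuclideanSpace ℂ (Fin n)) :
    w = cx (WithLp.toLp 2 (fun i => (w i).re)) + Complex.I • cx (WithLp.toLp 2 (fun i => (w i).im)) := by
  ext i
  simp [cx, smul_eq_mul]
  rw [mul_comm, Complex.re_add_im]

lemma norm_ec_map_le {R : Matrix (Fin n) (Fin n) ℝ} {c : ℝ} (hc : 0 ≤ c)
    (h : ∀ x : EuclideanSpace ℝ (Fin n), ‖mApply R x‖ ≤ c * ‖x‖)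
    (w : EuclideanSpace ℂ (Fin n)) :
    ‖ec ((R.map Complex.ofReal) *ᵥ w)‖ ≤ c * ‖w‖ := by
  set a : EuclideanSpace ℝ (Fin n) := WithLp.toLp 2 (fun i => (w i).re) with ha
  set b : EuclideanSpace ℝ (Fin n) := WithLp.toLp 2 (fun i => (w i).im) with hb
  have hw : w = cx a + Complex.I • cx b := decomp_w w
  have hmv : ec ((R.map Complex.ofReal) *ᵥ w)
      = cx (mApply R a) + Complex.I • cx (mApply R b) := by
    rw [hw]
    have hlin : (R.map Complex.ofReal) *ᵥ (cx a + Complex.I • cx b)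
        = (R.map Complex.ofReal) *ᵥ (cx a) + Complex.I • ((R.map Complex.ofReal) *ᵥ (cx b)) := by
      rw [Matrix.mulVec_add, Matrix.mulVec_smul]
    show ec _ = _
    rw [show (cx a + Complex.I • cx b).ofLp = (cx a).ofLp + Complex.I • (cx b).ofLp from rfl, hlin]
    have h1 := mulVec_map R a
    have h2 := mulVec_map R b
    calc (ec ((R.map Complex.ofReal) *ᵥ (cx a) +
            Complex.I • ((R.map Complex.ofReal) *ᵥ (cx b))) : EuclideanSpace ℂ (Fin n))
        = ec ((R.map Complex.ofReal) *ᵥ (cx a)) +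
            Complex.I • ec ((R.map Complex.ofReal) *ᵥ (cx b)) := rfl
    _ = cx (mApply R a) + Complex.I • cx (mApply R b) := by rw [h1, h2]
  have hsq : ‖ec ((R.map Complex.ofReal) *ᵥ w)‖ ^ 2 ≤ (c * ‖w‖) ^ 2 := by
    rw [hmv, norm_sq_cx_add_smul]
    have hwsq : ‖w‖ ^ 2 = ‖a‖ ^ 2 + ‖b‖ ^ 2 := by
      rw [hw]; exact norm_sq_cx_add_smul a b
    have e1 : ‖mApply R a‖ ^ 2 ≤ (c * ‖a‖) ^ 2 := pow_le_pow_left₀ (norm_nonneg _) (h a) 2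
    have e2 : ‖mApply R b‖ ^ 2 ≤ (c * ‖b‖) ^ 2 := pow_le_pow_left₀ (norm_nonneg _) (h b) 2
    rw [mul_pow, hwsq]
    nlinarith [norm_nonneg a, norm_nonneg b]
  have h0 : (0:ℝ) ≤ c * ‖w‖ := by positivity
  nlinarith [norm_nonneg (ec ((R.map Complex.ofReal) *ᵥ w))]

end PosEigenAux

open PosEigenAux in
open scoped Matrix.Norms.L2Operator in
/-- `A ∈ M⁺(n,ℝ)` iff `‖t^A x‖ ≤ C t^γ ‖x‖` for `0 < t ≤ 1`. -/
theorem posEigen_iff_contraction {n : ℕ} (A : Matrix (Fin n) (Fin n) ℝ) :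
    PosEigen A ↔ ∃ C γ : ℝ, 0 < C ∧ 0 < γ ∧
      ∀ (x : EuclideanSpace ℝ (Fin n)) (t : ℝ), 0 < t → t ≤ 1 →
        ‖mApply (texp A t) x‖ ≤ C * t ^ γ * ‖x‖ := by
  constructor
  · intro hA
    rcases Nat.eq_zero_or_pos n with h0 | hn
    · subst h0
      haveI : Subsingleton (EuclideanSpace ℝ (Fin 0)) := ⟨fun a b => by ext i; exact i.elim0⟩
      refine ⟨1, 1, one_pos, one_pos, fun x t ht _ => ?_⟩
      rw [Subsingleton.elim (mApply (texp A t) x) 0, norm_zero]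
      positivity
    · obtain ⟨C, γ, hC, hγ, hbound⟩ := main_bound hn (M := A.map Complex.ofReal) hA
      refine ⟨C, γ, hC, hγ, fun x t ht ht1 => ?_⟩
      calc ‖mApply (texp A t) x‖ ≤ ‖(texp A t).map Complex.ofReal‖ * ‖x‖ := norm_mApply_le _ _
      _ ≤ C * t ^ γ * ‖x‖ := by
          refine mul_le_mul_of_nonneg_right ?_ (norm_nonneg x)
          rw [map_texp]
          exact hbound t ht ht1
  · rintro ⟨C, γ, hC, hγ, h⟩ μ hμ
    by_contra hre
    push_neg at hre
    obtain ⟨v, hv0, hv⟩ := mem_spectrum_iff_eig.mp hμ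
    set t : ℝ := min 1 ((2*C)⁻¹ ^ (1/γ)) with htdef
    have h2C : 0 < (2*C)⁻¹ := by positivity
    have ht0 : 0 < t := lt_min one_pos (Real.rpow_pos_of_pos h2C _)
    have ht1 : t ≤ 1 := min_le_left _ _
    have hb := norm_ec_map_le (R := texp A t) (c := C * t ^ γ) (by positivity)
      (fun x => h x t ht0 ht1) (ec v)
    have heig : ((Real.log t) • (A.map Complex.ofReal)) *ᵥ v
        = ((Real.log t : ℂ) * μ) • v := by
      rw [real_smul_matrix, Matrix.smul_mulVec, hv, smul_smul]
    have hexp : (NormedSpace.exp ((Real.log t) • (A.map Complex.ofReal))) *ᵥ (ec v)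
        = Complex.exp ((Real.log t : ℂ) * μ) • v := exp_mulVec_eig heig
    rw [map_texp] at hb
    rw [hexp] at hb
    have hbn : ‖Complex.exp ((Real.log t : ℂ) * μ)‖ * ‖ec v‖ ≤ C * t ^ γ * ‖ec v‖ := by
      have : (ec (Complex.exp ((Real.log t : ℂ) * μ) • v) : EuclideanSpace ℂ (Fin n))
          = Complex.exp ((Real.log t : ℂ) * μ) • ec v := rfl
      rw [this, norm_smul] at hb
      exact hb
    have hvpos : 0 < ‖ec v‖ := by
      refine norm_pos_iff.mpr ?_
      intro hh
      exact hv0 (congrArg WithLp.ofLp hh)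
    have hkey : ‖Complex.exp ((Real.log t : ℂ) * μ)‖ ≤ C * t ^ γ :=
      le_of_mul_le_mul_right (by linarith [hbn]) hvpos
    have habs : ‖Complex.exp ((Real.log t : ℂ) * μ)‖ = Real.exp (Real.log t * μ.re) := by
      rw [Complex.norm_exp]
      congr 1
      simp [Complex.mul_re]
    rw [habs] at hkey
    have hlow : (1:ℝ) ≤ Real.exp (Real.log t * μ.re) := by
      refine one_le_exp' ?_
      have hlog : Real.log t ≤ 0 := Real.log_nonpos (le_of_lt ht0) ht1
      nlinarith
    have hup : C * t ^ γ ≤ 1/2 := by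
      have hmin : t ≤ (2*C)⁻¹ ^ (1/γ) := min_le_right _ _
      have h1 : t ^ γ ≤ ((2*C)⁻¹ ^ (1/γ)) ^ γ :=
        Real.rpow_le_rpow (le_of_lt ht0) hmin (le_of_lt hγ)
      have h2 : ((2*C)⁻¹ ^ (1/γ)) ^ γ = (2*C)⁻¹ := by
        rw [← Real.rpow_mul (le_of_lt h2C), one_div_mul_cancel (ne_of_gt hγ), Real.rpow_one]
      rw [h2] at h1
      have h3 : C * t ^ γ ≤ C * (2*C)⁻¹ := mul_le_mul_of_nonneg_left h1 (le_of_lt hC)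
      have h4 : C * (2*C)⁻¹ = 1/2 := by
        field_simp
      linarith
    linarith
end
end

section
/- Let A ∈ M⁺(n,ℝ) and let φ : ℝⁿ → [0,∞) be a continuous positive A-homogeneous function (φ(x) > 0 for x ≠ 0). Then there exist constants 0 < γ ≤ β and positive constants c₁,…,c₄ such that for all x with ‖x‖ ≤ 1, c₁‖x‖^{1/γ} ≤ φ(x) ≤ c₂‖x‖^{1/β}, and for all x with ‖x‖ ≥ 1, c₃‖x‖^{1/β} ≤ φ(x) ≤ c₄‖x‖^{1/γ}. -/
open MeasureTheory Matrix Real Set Filter Topology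

noncomputable section

namespace HGB

open scoped ENNReal NNReal

variable {n : ℕ}


/-- eigenvector computation for matrix exponential -/
lemma pow_mulVec_eigen (Ac : Matrix (Fin n) (Fin n) ℂ) (v : Fin n → ℂ) (lam : ℂ)
    (hv : Ac.mulVec v = lam • v) (k : ℕ) : (Ac ^ k).mulVec v = (lam ^ k) • v := by
  induction k with
  | zero => simp [Matrix.one_mulVec]
  | succ k ih =>
      rw [pow_succ, ← Matrix.mulVec_mulVec, hv, Matrix.mulVec_smul, ih, pow_succ,
        smul_smul, mul_comm]

lemma exp_mulVec_eigen (Ac : Matrix (Fin n) (Fin n) ℂ) (v : Fin n → ℂ) (lam : ℂ)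
    (hv : Ac.mulVec v = lam • v) :
    (NormedSpace.exp Ac).mulVec v = Complex.exp lam • v := by
  letI : SeminormedRing (Matrix (Fin n) (Fin n) ℂ) := Matrix.linftyOpSemiNormedRing
  letI : NormedRing (Matrix (Fin n) (Fin n) ℂ) := Matrix.linftyOpNormedRing
  letI : NormedAlgebra ℂ (Matrix (Fin n) (Fin n) ℂ) := Matrix.linftyOpNormedAlgebra
  let L : Matrix (Fin n) (Fin n) ℂ →ₗ[ℂ] (Fin n → ℂ) :=
    { toFun := fun M => M.mulVec v
      map_add' := fun M N => Matrix.add_mulVec M N v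
      map_smul' := fun a M => Matrix.smul_mulVec a M v }
  have hL : Continuous L := L.continuous_of_finiteDimensional
  let Lc : Matrix (Fin n) (Fin n) ℂ →L[ℂ] (Fin n → ℂ) := ⟨L, hL⟩
  have h1 : (NormedSpace.exp Ac).mulVec v
      = Lc (∑' k : ℕ, ((k.factorial : ℂ))⁻¹ • Ac ^ k) := by
    rw [NormedSpace.exp_eq_tsum ℂ]; rfl
  rw [h1, Lc.map_tsum (NormedSpace.expSeries_summable' (𝕂 := ℂ) Ac)]
  have h2 : ∀ k : ℕ, Lc (((k.factorial : ℂ))⁻¹ • Ac ^ k)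
      = (((k.factorial : ℂ))⁻¹ * lam ^ k) • v := by
    intro k
    have : Lc (((k.factorial : ℂ))⁻¹ • Ac ^ k)
        = ((k.factorial : ℂ))⁻¹ • (Ac ^ k).mulVec v := map_smul Lc _ _
    rw [this, pow_mulVec_eigen Ac v lam hv k, smul_smul]
  simp_rw [h2]
  rw [Summable.tsum_smul_const]
  · congr 1
    rw [Complex.exp_eq_exp_ℂ, NormedSpace.exp_eq_tsum ℂ]
    simp_rw [smul_eq_mul]
  · have := NormedSpace.expSeries_summable' (𝕂 := ℂ) lam
    simpa [smul_eq_mul] using this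




/-- spectral mapping (surjectivity direction) for exp of a matrix -/
lemma spec_exp (Ac : Matrix (Fin n) (Fin n) ℂ) (μ : ℂ)
    (hμ : μ ∈ spectrum ℂ (NormedSpace.exp Ac)) :
    ∃ lam ∈ spectrum ℂ Ac, μ = Complex.exp lam := by
  let e := Matrix.toLinAlgEquiv' (R := ℂ) (n := Fin n)
  have hμ' : μ ∈ spectrum ℂ (e (NormedSpace.exp Ac)) := by
    rwa [AlgEquiv.spectrum_eq]
  set g : Module.End ℂ (Fin n → ℂ) := e (NormedSpace.exp Ac) with hg
  set a : Module.End ℂ (Fin n → ℂ) := e Ac with ha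
  have hcomm : Commute a g := by
    have hc : Commute Ac (NormedSpace.exp Ac) := (Commute.refl Ac).exp_right
    show a * g = g * a
    rw [ha, hg, ← _root_.map_mul, ← _root_.map_mul, hc.eq]
  have heig : g.HasEigenvalue μ := Module.End.hasEigenvalue_iff_mem_spectrum.mpr hμ'
  obtain ⟨v, hv⟩ := heig.exists_hasEigenvector
  set K := g.eigenspace μ with hK
  have hKstab : ∀ w ∈ K, a w ∈ K := by
    intro w hw
    rw [hK, Module.End.mem_eigenspace_iff] at hw ⊢
    have : g (a w) = a (g w) := by
      rw [← Module.End.mul_apply, ← Module.End.mul_apply, hcomm.eq]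
    rw [this, hw, _root_.map_smul]
  let aK : Module.End ℂ K := a.restrict hKstab
  haveI : Nontrivial K := by
    refine ⟨⟨⟨v, hv.1⟩, 0, ?_⟩⟩
    intro h
    exact hv.2 (by simpa [Subtype.ext_iff] using h)
  obtain ⟨lam, hlam⟩ := Module.End.exists_eigenvalue aK
  obtain ⟨w, hw⟩ := hlam.exists_hasEigenvector
  have hw1 : a (w : Fin n → ℂ) = lam • (w : Fin n → ℂ) := by
    have h0 : aK w = lam • w := Module.End.mem_eigenspace_iff.mp hw.1
    have h1 : ((aK w : K) : Fin n → ℂ) = a (w : Fin n → ℂ) := rfl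
    rw [← h1, h0, Submodule.coe_smul]
  have hwne : (w : Fin n → ℂ) ≠ 0 := fun h => hw.2 (ZeroMemClass.coe_eq_zero.mp h)
  have hlamspec : lam ∈ spectrum ℂ Ac := by
    have : a.HasEigenvalue lam :=
      Module.End.hasEigenvalue_of_hasEigenvector
        ⟨Module.End.mem_eigenspace_iff.mpr hw1, hwne⟩
    have h2 := Module.End.hasEigenvalue_iff_mem_spectrum.mp this
    rwa [AlgEquiv.spectrum_eq] at h2
  refine ⟨lam, hlamspec, ?_⟩
  have hgw : g (w : Fin n → ℂ) = μ • (w : Fin n → ℂ) :=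
    Module.End.mem_eigenspace_iff.mp w.2
  have hgw2 : g (w : Fin n → ℂ) = Complex.exp lam • (w : Fin n → ℂ) := by
    have hmul : Ac.mulVec (w : Fin n → ℂ) = lam • (w : Fin n → ℂ) := by
      have : a (w : Fin n → ℂ) = Ac.mulVec (w : Fin n → ℂ) :=
        Matrix.toLinAlgEquiv'_apply Ac (w : Fin n → ℂ)
      rw [← this, hw1]
    have : g (w : Fin n → ℂ) = (NormedSpace.exp Ac).mulVec (w : Fin n → ℂ) :=
      Matrix.toLinAlgEquiv'_apply _ _
    rw [this, exp_mulVec_eigen Ac _ lam hmul]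
  have := hgw.symm.trans hgw2
  have h3 : (μ - Complex.exp lam) • (w : Fin n → ℂ) = 0 := by
    rw [sub_smul, this, sub_self]
  rcases smul_eq_zero.mp h3 with h | h
  · exact (sub_eq_zero.mp h)
  · exact absurd h hwne




def cvec (x : EuclideanSpace ℝ (Fin n)) : EuclideanSpace ℂ (Fin n) := WithLp.toLp 2 (fun i => (x i : ℂ))

def cmat (A : Matrix (Fin n) (Fin n) ℝ) : Matrix (Fin n) (Fin n) ℂ := A.map Complex.ofReal

def Mc (A : Matrix (Fin n) (Fin n) ℝ) :
    EuclideanSpace ℂ (Fin n) →L[ℂ] EuclideanSpace ℂ (Fin n) :=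
  Matrix.toEuclideanCLM (𝕜 := ℂ) (cmat A)

lemma norm_cvec (x : EuclideanSpace ℝ (Fin n)) : ‖cvec x‖ = ‖x‖ := by
  rw [EuclideanSpace.norm_eq, EuclideanSpace.norm_eq]
  congr 1
  refine Finset.sum_congr rfl fun i _ => ?_
  simp [cvec, Complex.norm_real]

lemma cvec_mulVec (M : Matrix (Fin n) (Fin n) ℝ) (x : EuclideanSpace ℝ (Fin n)) :
    WithLp.toLp 2 ((cmat M).mulVec (cvec x)) = cvec (mApply M x) := by
  ext i
  simp [cmat, cvec, mApply, Matrix.mulVec, dotProduct, Complex.ofReal_sum, Complex.ofReal_mul]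

lemma map_exp_ofReal (B : Matrix (Fin n) (Fin n) ℝ) :
    cmat (NormedSpace.exp B) = NormedSpace.exp (cmat B) := by
  letI : SeminormedRing (Matrix (Fin n) (Fin n) ℝ) := Matrix.linftyOpSemiNormedRing
  letI : NormedRing (Matrix (Fin n) (Fin n) ℝ) := Matrix.linftyOpNormedRing
  letI : NormedAlgebra ℝ (Matrix (Fin n) (Fin n) ℝ) := Matrix.linftyOpNormedAlgebra
  letI : SeminormedRing (Matrix (Fin n) (Fin n) ℂ) := Matrix.linftyOpSemiNormedRing
  letI : NormedRing (Matrix (Fin n) (Fin n) ℂ) := Matrix.linftyOpNormedRing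
  letI : NormedAlgebra ℝ (Matrix (Fin n) (Fin n) ℂ) := Matrix.linftyOpNormedAlgebra
  letI : NormedAlgebra ℚ (Matrix (Fin n) (Fin n) ℝ) :=
    NormedAlgebra.restrictScalars ℚ ℝ (Matrix (Fin n) (Fin n) ℝ)
  let f : Matrix (Fin n) (Fin n) ℝ →+* Matrix (Fin n) (Fin n) ℂ :=
    Complex.ofRealHom.mapMatrix
  have hlin : Continuous f := by
    let L : Matrix (Fin n) (Fin n) ℝ →ₗ[ℝ] Matrix (Fin n) (Fin n) ℂ :=
      { toFun := fun M => M.map Complex.ofReal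
        map_add' := fun M N => by funext i j; simp [Matrix.map_apply]
        map_smul' := fun a M => by funext i j; simp [Matrix.map_apply] }
    exact L.continuous_of_finiteDimensional
  have h := NormedSpace.map_exp f hlin B
  have h2 : NormedSpace.exp (f B) = NormedSpace.exp (f B) := by
    rfl
  show (NormedSpace.exp B).map Complex.ofReal = NormedSpace.exp (cmat B)
  calc (NormedSpace.exp B).map Complex.ofReal = f (NormedSpace.exp B) := rfl
    _ = NormedSpace.exp (f B) := h
    _ = NormedSpace.exp (f B) := h2
    _ = NormedSpace.exp (cmat B) := rfl

lemma clm_exp (Bc : Matrix (Fin n) (Fin n) ℂ) :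
    Matrix.toEuclideanCLM (𝕜 := ℂ) (NormedSpace.exp Bc)
      = NormedSpace.exp (Matrix.toEuclideanCLM (𝕜 := ℂ) Bc) := by
  letI : SeminormedRing (Matrix (Fin n) (Fin n) ℂ) := Matrix.linftyOpSemiNormedRing
  letI : NormedRing (Matrix (Fin n) (Fin n) ℂ) := Matrix.linftyOpNormedRing
  letI : NormedAlgebra ℂ (Matrix (Fin n) (Fin n) ℂ) := Matrix.linftyOpNormedAlgebra
  letI : NormedAlgebra ℚ (Matrix (Fin n) (Fin n) ℂ) :=
    NormedAlgebra.restrictScalars ℚ ℂ (Matrix (Fin n) (Fin n) ℂ)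
  have hcont : Continuous (Matrix.toEuclideanCLM (𝕜 := ℂ) (n := Fin n)) := by
    let L : Matrix (Fin n) (Fin n) ℂ →ₗ[ℂ]
        (EuclideanSpace ℂ (Fin n) →L[ℂ] EuclideanSpace ℂ (Fin n)) :=
      { toFun := ⇑(Matrix.toEuclideanCLM (𝕜 := ℂ) (n := Fin n))
        map_add' := fun M N => map_add _ M N
        map_smul' := fun a M => map_smul _ a M }
    exact L.continuous_of_finiteDimensional
  exact NormedSpace.map_exp (Matrix.toEuclideanCLM (𝕜 := ℂ) (n := Fin n)) hcont Bc

lemma smul_cmat (s : ℝ) (A : Matrix (Fin n) (Fin n) ℝ) :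
    cmat (s • A) = (s : ℂ) • cmat A := by
  funext i j
  simp [cmat, Matrix.map_apply]

/-- THE BRIDGE: real matrix exponential action vs complex CLM exponential -/
lemma bridge (A : Matrix (Fin n) (Fin n) ℝ) (s : ℝ) (x : EuclideanSpace ℝ (Fin n)) :
    ‖mApply (NormedSpace.exp (s • A)) x‖
      = ‖NormedSpace.exp ((s : ℂ) • Mc A) (cvec x)‖ := by
  rw [← norm_cvec (mApply (NormedSpace.exp (s • A)) x), ← cvec_mulVec,
    map_exp_ofReal, smul_cmat]
  have h1 : NormedSpace.exp ((s : ℂ) • Mc A)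
      = Matrix.toEuclideanCLM (𝕜 := ℂ) (NormedSpace.exp ((s : ℂ) • cmat A)) := by
    rw [clm_exp, Mc, _root_.map_smul]
  rw [h1]
  rfl




abbrev CLM (n : ℕ) := EuclideanSpace ℂ (Fin n) →L[ℂ] EuclideanSpace ℂ (Fin n)

lemma norm_exp_le (T : CLM n) : ‖NormedSpace.exp T‖ ≤ Real.exp ‖T‖ := by
  rw [NormedSpace.exp_eq_tsum ℂ]
  refine (norm_tsum_le_tsum_norm (NormedSpace.norm_expSeries_summable' T)).trans ?_
  have hexp : Real.exp ‖T‖ = ∑' k : ℕ, ‖T‖ ^ k / (k.factorial : ℝ) := by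
    rw [Real.exp_eq_exp_ℝ, NormedSpace.exp_eq_tsum ℝ]
    exact tsum_congr fun k => by rw [smul_eq_mul, div_eq_inv_mul]
  rw [hexp]
  refine Summable.tsum_le_tsum ?_ (NormedSpace.norm_expSeries_summable' T)
    (Real.summable_pow_div_factorial ‖T‖)
  intro k
  rw [norm_smul ((k.factorial : ℂ))⁻¹ (T ^ k), norm_inv]
  rcases Nat.eq_zero_or_pos k with hk | hk
  · subst hk
    rw [pow_zero, pow_zero, Nat.factorial_zero, Nat.cast_one, Nat.cast_one, norm_one,
      inv_one, one_mul, div_one]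
    calc ‖(1 : CLM n)‖ = ‖ContinuousLinearMap.id ℂ (EuclideanSpace ℂ (Fin n))‖ := rfl
      _ ≤ 1 := ContinuousLinearMap.norm_id_le
  · have h1 : ‖T ^ k‖ ≤ ‖T‖ ^ k := norm_pow_le' T hk
    have h2 : ‖((k.factorial : ℂ))‖ = (k.factorial : ℝ) := by simp
    rw [h2, div_eq_inv_mul]
    have h3 : (0:ℝ) ≤ ((k.factorial : ℝ))⁻¹ := by positivity
    exact mul_le_mul_of_nonneg_left h1 h3

def Es (N : CLM n) (s : ℝ) : CLM n := NormedSpace.exp ((s : ℂ) • N)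

lemma Es_add (N : CLM n) (a b : ℝ) : Es N (a + b) = Es N a * Es N b := by
  rw [Es, Es, Es]
  have h : ((a + b : ℝ) : ℂ) • N = (a : ℂ) • N + (b : ℂ) • N := by
    rw [show ((a + b : ℝ) : ℂ) = (a : ℂ) + (b : ℂ) by push_cast; ring,
      add_smul ((a : ℂ)) ((b : ℂ)) N]
  rw [h]
  letI : NormedAlgebra ℚ (CLM n) := NormedAlgebra.restrictScalars ℚ ℂ (CLM n)
  exact NormedSpace.exp_add_of_commute (((Commute.refl N).smul_left _).smul_right _)

lemma Es_zero (N : CLM n) : Es N 0 = 1 := by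
  rw [Es, Complex.ofReal_zero, zero_smul ℂ N, NormedSpace.exp_zero]

lemma Es_cancel (N : CLM n) (s : ℝ) (v : EuclideanSpace ℂ (Fin n)) :
    Es N (-s) (Es N s v) = v := by
  have h : Es N (-s) * Es N s = 1 := by
    rw [← Es_add, neg_add_cancel, Es_zero]
  calc Es N (-s) (Es N s v) = (Es N (-s) * Es N s) v := rfl
    _ = v := by rw [h]; rfl

lemma norm_Es_le (N : CLM n) (u : ℝ) : ‖Es N u‖ ≤ Real.exp (|u| * ‖N‖) := by
  refine (norm_exp_le _).trans ?_
  have h : ‖(u : ℂ) • N‖ = |u| * ‖N‖ := by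
    rw [norm_smul ((u : ℂ)) N, Complex.norm_real, Real.norm_eq_abs]
  rw [h]

lemma Es_nsmul (N : CLM n) (m : ℕ) (u : ℝ) : Es N (m * u) = Es N u ^ m := by
  rw [Es, Es]
  have h : ((m * u : ℝ) : ℂ) • N = m • ((u : ℂ) • N) := by
    rw [show ((m * u : ℝ) : ℂ) = ((m : ℕ) : ℂ) * (u : ℂ) by push_cast; ring,
      mul_smul, Nat.cast_smul_eq_nsmul ℂ m ((u : ℂ) • N)]
  letI : NormedAlgebra ℚ (CLM n) := NormedAlgebra.restrictScalars ℚ ℂ (CLM n)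
  rw [h, NormedSpace.exp_nsmul]




lemma decay (hn : 0 < n) (A : Matrix (Fin n) (Fin n) ℝ) (hA : PosEigen A) :
    ∃ γ C : ℝ, 0 < γ ∧ 1 ≤ C ∧
      ∀ s : ℝ, 0 ≤ s → ‖Es (Mc A) (-s)‖ ≤ C * Real.exp (-(γ * s)) := by
  haveI hETriv : Nontrivial (EuclideanSpace ℂ (Fin n)) := by
    refine ⟨EuclideanSpace.single ⟨0, hn⟩ (1 : ℂ), 0, fun h => ?_⟩
    have := congrArg (fun v => v ⟨0, hn⟩) h
    simp [EuclideanSpace.single_apply] at this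
  haveI : Nontrivial (CLM n) := by
    obtain ⟨v, hv⟩ := exists_ne (0 : EuclideanSpace ℂ (Fin n))
    refine ⟨1, 0, fun h => hv ?_⟩
    have := ContinuousLinearMap.ext_iff.mp h v
    simpa using this
  set N := Mc A with hN
  set T := NormedSpace.exp (-N) with hT
  have hspec : ∀ μ ∈ spectrum ℂ T, ‖μ‖₊ < 1 := by
    intro μ hμ
    have h1 : T = Matrix.toEuclideanCLM (𝕜 := ℂ) (NormedSpace.exp (-(cmat A))) := by
      rw [clm_exp, map_neg]
      rfl
    rw [h1, AlgEquiv.spectrum_eq] at hμ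
    obtain ⟨lam, hlam, rfl⟩ := spec_exp (-(cmat A)) μ hμ
    have h2 : -lam ∈ spectrum ℂ (cmat A) := by
      rw [← spectrum.neg_eq] at hlam
      exact Set.mem_neg.mp hlam
    have h3 : 0 < (-lam).re := hA (-lam) h2
    have h4 : ‖Complex.exp lam‖ < 1 := by
      rw [Complex.norm_exp, Real.exp_lt_one_iff]
      have : lam.re = -(-lam).re := by simp
      rw [this]
      linarith
    rw [← NNReal.coe_lt_coe]
    simpa using h4
  have hrad : spectralRadius ℂ T < 1 := by
    obtain ⟨z, hz, hz2⟩ := spectrum.exists_nnnorm_eq_spectralRadius T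
    rw [← hz2]
    exact_mod_cast hspec z hz
  have hg := spectrum.pow_nnnorm_pow_one_div_tendsto_nhds_spectralRadius T
  have hev := (hg.eventually_lt_const hrad).and (Filter.eventually_ge_atTop 1)
  obtain ⟨k, hklt, hk1⟩ := hev.exists
  have hk0 : (0:ℝ) < k := by exact_mod_cast hk1
  have hTk : ‖T ^ k‖ < 1 := by
    by_contra hc
    push_neg at hc
    have hge : (1 : ℝ≥0∞) ≤ (‖T ^ k‖₊ : ℝ≥0∞) := by
      exact_mod_cast (by exact_mod_cast hc : (1:ℝ≥0) ≤ ‖T ^ k‖₊)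
    have h5 : (1:ℝ≥0∞) ^ (1/(k:ℝ)) ≤ (‖T ^ k‖₊ : ℝ≥0∞) ^ (1/(k:ℝ)) :=
      ENNReal.rpow_le_rpow hge (by positivity)
    rw [ENNReal.one_rpow] at h5
    exact absurd (lt_of_le_of_lt h5 hklt) (lt_irrefl _)
  set ρ := max ‖T ^ k‖ (Real.exp (-1)) with hρ
  have hρ0 : 0 < ρ := lt_of_lt_of_le (Real.exp_pos _) (le_max_right _ _)
  have hρ1 : ρ < 1 := max_lt hTk (Real.exp_lt_one_iff.mpr (by norm_num))
  have hTρ : ‖T ^ k‖ ≤ ρ := le_max_left _ _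
  have hlog : Real.log ρ < 0 := Real.log_neg hρ0 hρ1
  have hmlog : (0:ℝ) < -Real.log ρ := by linarith
  refine ⟨-Real.log ρ / k, Real.exp ((k:ℝ) * ‖N‖ + (-Real.log ρ / k) * k), ?_, ?_, ?_⟩
  · exact div_pos hmlog hk0
  · apply Real.one_le_exp
    have t1 : (0:ℝ) ≤ (k:ℝ) * ‖N‖ := mul_nonneg hk0.le (norm_nonneg _)
    have t2 : (0:ℝ) ≤ -Real.log ρ / k * k :=
      mul_nonneg (div_nonneg hmlog.le hk0.le) hk0.le
    linarith
  set γ := -Real.log ρ / k with hγ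
  have hγ0 : 0 < γ := div_pos hmlog hk0
  have hlogρ : Real.log ρ = -(γ * k) := by
    rw [hγ, div_mul_cancel₀ _ hk0.ne', neg_neg]
  intro s hs
  set m := ⌊s / k⌋₊ with hm
  have h1 : (k:ℝ) * m ≤ s := by
    have := Nat.floor_le (a := s / k) (by positivity)
    rw [mul_comm]
    exact (le_div_iff₀ hk0).mp this
  have h2 : s < k * (m + 1) := by
    have := Nat.lt_floor_add_one (s / k)
    rw [mul_comm]
    exact_mod_cast (div_lt_iff₀ hk0).mp this
  have hsplit : Es N (-s) = Es N (-(s - k * m)) * Es N ((m:ℝ) * (-(k:ℝ))) := by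
    rw [← Es_add]
    congr 1
    ring
  have hPk : Es N (-(k:ℝ)) = T ^ k := by
    have e1 : Es N (-(k:ℝ)) = Es N ((k:ℝ) * (-1)) := by norm_num
    rw [e1, Es_nsmul N k (-1)]
    have e2 : ((-1:ℝ):ℂ) • N = -N := by
      rw [Complex.ofReal_neg, Complex.ofReal_one, neg_smul (1:ℂ) N, one_smul ℂ N]
    rw [hT, Es, e2]
  have hP : Es N ((m:ℝ) * (-(k:ℝ))) = (T ^ k) ^ m := by
    rw [Es_nsmul N m (-(k:ℝ)), hPk]
  have hpow : ∀ j : ℕ, ‖(T ^ k) ^ j‖ ≤ ρ ^ j := by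
    intro j
    induction j with
    | zero =>
        rw [pow_zero, pow_zero]
        calc ‖(1 : CLM n)‖ = ‖ContinuousLinearMap.id ℂ (EuclideanSpace ℂ (Fin n))‖ := rfl
          _ ≤ 1 := ContinuousLinearMap.norm_id_le
    | succ j ih =>
        rw [pow_succ, pow_succ]
        calc ‖(T ^ k) ^ j * T ^ k‖ ≤ ‖(T ^ k) ^ j‖ * ‖T ^ k‖ := norm_mul_le _ _
          _ ≤ ρ ^ j * ρ := by
              apply mul_le_mul ih hTρ (norm_nonneg _) (le_of_lt (by positivity))
  have hρm : ρ ^ m ≤ Real.exp (γ * k) * Real.exp (-(γ * s)) := by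
    have e1 : ρ ^ m = Real.exp ((m:ℝ) * Real.log ρ) := by
      rw [← Real.log_pow, Real.exp_log (pow_pos hρ0 m)]
    rw [e1, ← Real.exp_add]
    apply Real.exp_le_exp.mpr
    rw [hlogρ]
    have hkey : γ * (s - k) ≤ γ * (k * m) :=
      mul_le_mul_of_nonneg_left (by linarith) hγ0.le
    linarith [hkey]
  have hmid : ‖Es N (-(s - k * m))‖ ≤ Real.exp ((k:ℝ) * ‖N‖) := by
    refine (norm_Es_le N _).trans ?_
    apply Real.exp_le_exp.mpr
    have habs : |(-(s - k * m))| ≤ k := by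
      rw [abs_neg, abs_of_nonneg (by linarith)]
      linarith
    exact mul_le_mul_of_nonneg_right habs (norm_nonneg _)
  calc ‖Es N (-s)‖ = ‖Es N (-(s - k * m)) * Es N ((m:ℝ) * (-(k:ℝ)))‖ := by rw [← hsplit]
    _ ≤ ‖Es N (-(s - k * m))‖ * ‖Es N ((m:ℝ) * (-(k:ℝ)))‖ := norm_mul_le _ _
    _ ≤ Real.exp ((k:ℝ) * ‖N‖) * (ρ ^ m) := by
        apply mul_le_mul hmid _ (norm_nonneg _) (le_of_lt (Real.exp_pos _))
        rw [hP]; exact hpow m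
    _ ≤ Real.exp ((k:ℝ) * ‖N‖) * (Real.exp (γ * k) * Real.exp (-(γ * s))) := by
        apply mul_le_mul_of_nonneg_left hρm (le_of_lt (Real.exp_pos _))
    _ = Real.exp ((k:ℝ) * ‖N‖ + γ * k) * Real.exp (-(γ * s)) := by
        rw [Real.exp_add]; ring



lemma rearrange {C e1 e2 X R : ℝ} (hC : 0 < C) (he1 : 0 ≤ e1) (hee : e2 * e1 = 1)
    (h : X ≤ C * e2 * R) : C⁻¹ * e1 * X ≤ R := by
  calc C⁻¹ * e1 * X ≤ C⁻¹ * e1 * (C * e2 * R) :=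
        mul_le_mul_of_nonneg_left h (by positivity)
    _ = (C⁻¹ * C) * (e2 * e1) * R := by ring
    _ = R := by rw [inv_mul_cancel₀ hC.ne', hee, one_mul, one_mul]

lemma main_est (A : Matrix (Fin n) (Fin n) ℝ) (hA : PosEigen A) :
    ∃ γ β C₀ : ℝ, 0 < γ ∧ γ ≤ β ∧ 1 ≤ C₀ ∧
      ∀ (x : EuclideanSpace ℝ (Fin n)) (s : ℝ),
        (0 ≤ s → C₀⁻¹ * Real.exp (γ * s) * ‖x‖ ≤ ‖mApply (NormedSpace.exp (s • A)) x‖ ∧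
          ‖mApply (NormedSpace.exp (s • A)) x‖ ≤ C₀ * Real.exp (β * s) * ‖x‖) ∧
        (s ≤ 0 → C₀⁻¹ * Real.exp (β * s) * ‖x‖ ≤ ‖mApply (NormedSpace.exp (s • A)) x‖ ∧
          ‖mApply (NormedSpace.exp (s • A)) x‖ ≤ C₀ * Real.exp (γ * s) * ‖x‖) := by
  rcases Nat.eq_zero_or_pos n with h0 | hn
  · subst h0
    have hz : ∀ y : EuclideanSpace ℝ (Fin 0), y = 0 := fun y => PiLp.ext fun i => i.elim0
    refine ⟨1, 1, 1, one_pos, le_refl _, le_refl _, fun x s => ?_⟩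
    have hnx : ‖x‖ = 0 := by rw [hz x, norm_zero]
    have hnm : ‖mApply (NormedSpace.exp (s • A)) x‖ = 0 := by
      rw [hz (mApply (NormedSpace.exp (s • A)) x), norm_zero]
    constructor <;> intro _ <;> constructor <;> simp [hnx, hnm]
  obtain ⟨γ, C, hγ0, hC1, hdec⟩ := decay hn A hA
  have hC0 : (0:ℝ) < C := lt_of_lt_of_le one_pos hC1
  set N := Mc A with hNdef
  refine ⟨γ, max γ ‖N‖, C, hγ0, le_max_left _ _, hC1, fun x s => ?_⟩
  set β := max γ ‖N‖ with hβ
  have hNβ : ‖N‖ ≤ β := le_max_right _ _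
  have key : ∀ u : ℝ, ‖mApply (NormedSpace.exp (u • A)) x‖ = ‖Es N u (cvec x)‖ := by
    intro u
    rw [bridge A u x]
    rfl
  set v := cvec x with hv
  have hxv : ‖v‖ = ‖x‖ := norm_cvec x
  constructor
  · intro hs
    constructor
    · -- lower bound, s ≥ 0
      rw [key s, ← hxv]
      have hX : ‖v‖ ≤ C * Real.exp (-(γ * s)) * ‖Es N s v‖ := by
        calc ‖v‖ = ‖Es N (-s) (Es N s v)‖ := by rw [Es_cancel]
          _ ≤ ‖Es N (-s)‖ * ‖Es N s v‖ := ContinuousLinearMap.le_opNorm _ _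
          _ ≤ C * Real.exp (-(γ * s)) * ‖Es N s v‖ :=
              mul_le_mul_of_nonneg_right (hdec s hs) (norm_nonneg _)
      exact rearrange hC0 (Real.exp_pos _).le
        (by rw [← Real.exp_add]; simp) hX
    · -- upper bound, s ≥ 0
      rw [key s, ← hxv]
      calc ‖Es N s v‖ ≤ ‖Es N s‖ * ‖v‖ := ContinuousLinearMap.le_opNorm _ _
        _ ≤ Real.exp (|s| * ‖N‖) * ‖v‖ :=
            mul_le_mul_of_nonneg_right (norm_Es_le N s) (norm_nonneg _)
        _ ≤ C * Real.exp (β * s) * ‖v‖ := by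
            apply mul_le_mul_of_nonneg_right _ (norm_nonneg _)
            have h1 : |s| * ‖N‖ ≤ β * s := by
              rw [abs_of_nonneg hs, mul_comm]
              exact mul_le_mul_of_nonneg_right hNβ hs
            calc Real.exp (|s| * ‖N‖) ≤ Real.exp (β * s) := Real.exp_le_exp.mpr h1
              _ ≤ C * Real.exp (β * s) := le_mul_of_one_le_left (Real.exp_pos _).le hC1
  · intro hs
    constructor
    · -- lower bound, s ≤ 0
      rw [key s, ← hxv]
      have hX : ‖v‖ ≤ C * Real.exp (-(β * s)) * ‖Es N s v‖ := by
        have h2 : ‖Es N (-s)‖ ≤ Real.exp (-(β * s)) := by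
          refine (norm_Es_le N (-s)).trans (Real.exp_le_exp.mpr ?_)
          rw [abs_of_nonneg (by linarith)]
          have := mul_le_mul_of_nonneg_left hNβ (by linarith : (0:ℝ) ≤ -s)
          linarith [this]
        calc ‖v‖ = ‖Es N (-s) (Es N s v)‖ := by rw [Es_cancel]
          _ ≤ ‖Es N (-s)‖ * ‖Es N s v‖ := ContinuousLinearMap.le_opNorm _ _
          _ ≤ Real.exp (-(β * s)) * ‖Es N s v‖ :=
              mul_le_mul_of_nonneg_right h2 (norm_nonneg _)
          _ ≤ C * Real.exp (-(β * s)) * ‖Es N s v‖ := by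
              rw [mul_assoc]
              exact le_mul_of_one_le_left (by positivity) hC1
      exact rearrange hC0 (Real.exp_pos _).le (by rw [← Real.exp_add]; simp) hX
    · -- upper bound, s ≤ 0
      rw [key s, ← hxv]
      have h2 : ‖Es N s‖ ≤ C * Real.exp (γ * s) := by
        have := hdec (-s) (by linarith)
        rw [neg_neg] at this
        have e1 : -(γ * -s) = γ * s := by ring
        rwa [e1] at this
      calc ‖Es N s v‖ ≤ ‖Es N s‖ * ‖v‖ := ContinuousLinearMap.le_opNorm _ _
        _ ≤ C * Real.exp (γ * s) * ‖v‖ :=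
            mul_le_mul_of_nonneg_right h2 (norm_nonneg _)



lemma t_eq_rpow {γ t : ℝ} (hγ0 : γ ≠ 0) (ht : 0 < t) : (t ^ γ) ^ (1/γ) = t := by
  rw [← Real.rpow_mul ht.le, mul_one_div_cancel hγ0, Real.rpow_one]

lemma t_le_of_low {C₀ γ t r : ℝ} (hC0 : 0 < C₀) (hγ0 : 0 < γ) (ht : 0 < t)
    (h : C₀⁻¹ * t ^ γ ≤ r) : t ≤ (C₀ * r) ^ (1/γ) := by
  have h' : t ^ γ ≤ C₀ * r := by
    have h2 := mul_le_mul_of_nonneg_left h hC0.le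
    rwa [← mul_assoc, mul_inv_cancel₀ hC0.ne', one_mul] at h2
  calc t = (t ^ γ) ^ (1/γ) := (t_eq_rpow hγ0.ne' ht).symm
    _ ≤ (C₀ * r) ^ (1/γ) := Real.rpow_le_rpow (by positivity) h' (by positivity)

lemma le_t_of_high {C₀ γ t r : ℝ} (hC0 : 0 < C₀) (hγ0 : 0 < γ) (ht : 0 < t) (hr : 0 ≤ r)
    (h : r ≤ C₀ * t ^ γ) : (r / C₀) ^ (1/γ) ≤ t := by
  have h' : r / C₀ ≤ t ^ γ := by
    rw [div_le_iff₀ hC0]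
    linarith [h]
  calc (r / C₀) ^ (1/γ) ≤ (t ^ γ) ^ (1/γ) :=
        Real.rpow_le_rpow (by positivity) h' (by positivity)
    _ = t := t_eq_rpow hγ0.ne' ht

lemma exists_s (A : Matrix (Fin n) (Fin n) ℝ) {γ β C₀ : ℝ} (hγ0 : 0 < γ) (hC1 : 1 ≤ C₀)
    (hmain : ∀ (x : EuclideanSpace ℝ (Fin n)) (s : ℝ),
      (0 ≤ s → C₀⁻¹ * Real.exp (γ * s) * ‖x‖ ≤ ‖mApply (NormedSpace.exp (s • A)) x‖ ∧
        ‖mApply (NormedSpace.exp (s • A)) x‖ ≤ C₀ * Real.exp (β * s) * ‖x‖) ∧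
      (s ≤ 0 → C₀⁻¹ * Real.exp (β * s) * ‖x‖ ≤ ‖mApply (NormedSpace.exp (s • A)) x‖ ∧
        ‖mApply (NormedSpace.exp (s • A)) x‖ ≤ C₀ * Real.exp (γ * s) * ‖x‖))
    (x : EuclideanSpace ℝ (Fin n)) (hx : x ≠ 0) :
    ∃ s₀ : ℝ, ‖mApply (NormedSpace.exp ((-s₀) • A)) x‖ = 1 := by
  have hC0 : (0:ℝ) < C₀ := lt_of_lt_of_le one_pos hC1
  have hr : 0 < ‖x‖ := norm_pos_iff.mpr hx
  set h : ℝ → ℝ := fun s => ‖mApply (NormedSpace.exp ((-s) • A)) x‖ with hh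
  have hcont : Continuous h := by
    letI : SeminormedRing (Matrix (Fin n) (Fin n) ℝ) := Matrix.linftyOpSemiNormedRing
    letI : NormedRing (Matrix (Fin n) (Fin n) ℝ) := Matrix.linftyOpNormedRing
    letI : NormedAlgebra ℝ (Matrix (Fin n) (Fin n) ℝ) := Matrix.linftyOpNormedAlgebra
    letI : NormedAlgebra ℚ (Matrix (Fin n) (Fin n) ℝ) :=
      NormedAlgebra.restrictScalars ℚ ℝ (Matrix (Fin n) (Fin n) ℝ)
    have h1 : Continuous fun s : ℝ => NormedSpace.exp ((-s) • A) :=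
      NormedSpace.exp_continuous.comp (continuous_neg.smul continuous_const)
    let L : Matrix (Fin n) (Fin n) ℝ →ₗ[ℝ] EuclideanSpace ℝ (Fin n) :=
      { toFun := fun M => mApply M x
        map_add' := fun M N => by simp [mApply, Matrix.add_mulVec]
        map_smul' := fun a M => by simp [mApply, Matrix.smul_mulVec] }
    exact ((L.continuous_of_finiteDimensional).comp h1).norm
  have hub : ∀ s : ℝ, 0 ≤ s → h s ≤ C₀ * Real.exp (γ * (-s)) * ‖x‖ :=
    fun s hs => ((hmain x (-s)).2 (by linarith)).2
  have hlb : ∀ s : ℝ, s ≤ 0 → C₀⁻¹ * Real.exp (γ * (-s)) * ‖x‖ ≤ h s :=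
    fun s hs => ((hmain x (-s)).1 (by linarith)).1
  have hCx : (0:ℝ) < C₀ * ‖x‖ := by positivity
  have hCx' : (0:ℝ) < C₀ / ‖x‖ := by positivity
  set s₂ := max 0 ((Real.log (C₀ * ‖x‖) + 1)/γ) with hs₂def
  have hs₂ : h s₂ < 1 := by
    have hcomp : (Real.log (C₀ * ‖x‖) + 1)/γ ≤ s₂ := le_max_right _ _
    have h1 : Real.log (C₀ * ‖x‖) + 1 ≤ γ * s₂ := by
      calc Real.log (C₀ * ‖x‖) + 1 = γ * ((Real.log (C₀ * ‖x‖) + 1)/γ) := by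
            field_simp
        _ ≤ γ * s₂ := mul_le_mul_of_nonneg_left hcomp hγ0.le
    have h2 := hub s₂ (le_max_left _ _)
    have e0 : γ * (-s₂) = -(γ * s₂) := by ring
    rw [e0] at h2
    calc h s₂ ≤ C₀ * Real.exp (-(γ * s₂)) * ‖x‖ := h2
      _ = (C₀ * ‖x‖) * Real.exp (-(γ * s₂)) := by ring
      _ ≤ (C₀ * ‖x‖) * Real.exp (-(Real.log (C₀ * ‖x‖) + 1)) := by
          apply mul_le_mul_of_nonneg_left _ hCx.le
          exact Real.exp_le_exp.mpr (by linarith)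
      _ = Real.exp (-1) := by
          rw [show -(Real.log (C₀ * ‖x‖) + 1) = -Real.log (C₀ * ‖x‖) + (-1) by ring,
            Real.exp_add, Real.exp_neg, Real.exp_log hCx, ← mul_assoc,
            mul_inv_cancel₀ hCx.ne', one_mul]
      _ < 1 := Real.exp_lt_one_iff.mpr (by norm_num)
  set u := max 0 ((Real.log (C₀ / ‖x‖) + 1)/γ) with hudef
  have hu0 : 0 ≤ u := le_max_left _ _
  have hs₁ : 1 < h (-u) := by
    have hcomp : (Real.log (C₀ / ‖x‖) + 1)/γ ≤ u := le_max_right _ _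
    have h1 : Real.log (C₀ / ‖x‖) + 1 ≤ γ * u := by
      calc Real.log (C₀ / ‖x‖) + 1 = γ * ((Real.log (C₀ / ‖x‖) + 1)/γ) := by field_simp
        _ ≤ γ * u := mul_le_mul_of_nonneg_left hcomp hγ0.le
    have h2 := hlb (-u) (by linarith)
    rw [neg_neg] at h2
    have e1 : Real.exp 1 ≤ Real.exp (γ * u) * (‖x‖ / C₀) := by
      have : Real.exp (Real.log (C₀ / ‖x‖) + 1) ≤ Real.exp (γ * u) :=
        Real.exp_le_exp.mpr h1
      rw [Real.exp_add, Real.exp_log hCx'] at this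
      calc Real.exp 1 = (C₀ / ‖x‖) * Real.exp 1 * (‖x‖ / C₀) := by
            field_simp
        _ ≤ Real.exp (γ * u) * (‖x‖ / C₀) := by
            apply mul_le_mul_of_nonneg_right this (by positivity)
      
    calc (1:ℝ) < Real.exp 1 := by
          have := Real.exp_lt_exp.mpr (zero_lt_one (α := ℝ))
          rwa [Real.exp_zero] at this
      _ ≤ Real.exp (γ * u) * (‖x‖ / C₀) := e1
      _ = C₀⁻¹ * Real.exp (γ * u) * ‖x‖ := by ring
      _ ≤ h (-u) := h2
  have hsub := intermediate_value_uIcc (a := -u) (b := s₂) (hcont.continuousOn)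
  have h1m : (1:ℝ) ∈ uIcc (h (-u)) (h s₂) := by
    rw [Set.mem_uIcc]
    right
    exact ⟨hs₂.le, hs₁.le⟩
  obtain ⟨s₀, _, hs₀⟩ := hsub h1m
  exact ⟨s₀, hs₀⟩



lemma mApply_exp_cancel (A : Matrix (Fin n) (Fin n) ℝ) (s₀ : ℝ) (x : EuclideanSpace ℝ (Fin n)) :
    mApply (NormedSpace.exp (s₀ • A)) (mApply (NormedSpace.exp ((-s₀) • A)) x) = x := by
  simp only [mApply, WithLp.ofLp_toLp]
  rw [Matrix.mulVec_mulVec,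
    ← Matrix.exp_add_of_commute _ _ (((Commute.refl A).smul_left s₀).smul_right (-s₀)),
    show s₀ • A + (-s₀) • A = (0 : Matrix (Fin n) (Fin n) ℝ) by rw [← add_smul]; simp,
    NormedSpace.exp_zero]
  rw [Matrix.one_mulVec]

end HGB

/-- two-sided power bounds for a continuous positive `A`-homogeneous
function in terms of the exponents `γ ≤ β` of the norm estimates for `t^A`. -/
theorem homog_growth_bounds {n : ℕ} (A : Matrix (Fin n) (Fin n) ℝ) (hA : PosEigen A)
    (φ : EuclideanSpace ℝ (Fin n) → ℝ) (hcont : Continuous φ) (hhom : Homog A φ)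
    (hnn : ∀ x, 0 ≤ φ x) (hpos : ∀ x, x ≠ 0 → 0 < φ x) :
    ∃ γ β : ℝ, 0 < γ ∧ γ ≤ β ∧
      (∃ C₁ C₂ : ℝ, 0 < C₁ ∧ 0 < C₂ ∧ ∀ (x : EuclideanSpace ℝ (Fin n)) (t : ℝ),
        (1 ≤ t → C₁ * t ^ γ * ‖x‖ ≤ ‖mApply (texp A t) x‖ ∧
          ‖mApply (texp A t) x‖ ≤ C₂ * t ^ β * ‖x‖) ∧
        (0 < t → t ≤ 1 → C₁ * t ^ β * ‖x‖ ≤ ‖mApply (texp A t) x‖ ∧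
          ‖mApply (texp A t) x‖ ≤ C₂ * t ^ γ * ‖x‖)) ∧
      ∃ c₁ c₂ c₃ c₄ : ℝ, 0 < c₁ ∧ 0 < c₂ ∧ 0 < c₃ ∧ 0 < c₄ ∧
        ∀ x : EuclideanSpace ℝ (Fin n),
          (‖x‖ ≤ 1 → c₁ * ‖x‖ ^ (1/γ) ≤ φ x ∧ φ x ≤ c₂ * ‖x‖ ^ (1/β)) ∧
          (1 ≤ ‖x‖ → c₃ * ‖x‖ ^ (1/β) ≤ φ x ∧ φ x ≤ c₄ * ‖x‖ ^ (1/γ)) := by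
  obtain ⟨γ, β, C₀, hγ0, hγβ, hC1, hmain⟩ := HGB.main_est A hA
  have hC0 : (0:ℝ) < C₀ := lt_of_lt_of_le one_pos hC1
  have hβ0 : 0 < β := lt_of_lt_of_le hγ0 hγβ
  have hβγ : 1/β ≤ 1/γ := one_div_le_one_div_of_le hγ0 hγβ
  have hφ0 : φ 0 = 0 := by
    have h2 := hhom 2 (by norm_num) 0
    have h3 : mApply (texp A 2) 0 = 0 := by simp [mApply]
    rw [h3] at h2; linarith
  have part1 : ∀ (x : EuclideanSpace ℝ (Fin n)) (t : ℝ),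
      (1 ≤ t → C₀⁻¹ * t ^ γ * ‖x‖ ≤ ‖mApply (texp A t) x‖ ∧
        ‖mApply (texp A t) x‖ ≤ C₀ * t ^ β * ‖x‖) ∧
      (0 < t → t ≤ 1 → C₀⁻¹ * t ^ β * ‖x‖ ≤ ‖mApply (texp A t) x‖ ∧
        ‖mApply (texp A t) x‖ ≤ C₀ * t ^ γ * ‖x‖) := by
    intro x t
    constructor
    · intro ht
      have ht0 : (0:ℝ) < t := lt_of_lt_of_le one_pos ht
      have h := (hmain x (Real.log t)).1 (Real.log_nonneg ht)
      constructor
      · rw [Real.rpow_def_of_pos ht0, mul_comm (Real.log t) γ]; exact h.1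
      · rw [Real.rpow_def_of_pos ht0, mul_comm (Real.log t) β]; exact h.2
    · intro ht0 ht1
      have h := (hmain x (Real.log t)).2 (Real.log_nonpos ht0.le ht1)
      constructor
      · rw [Real.rpow_def_of_pos ht0, mul_comm (Real.log t) β]; exact h.1
      · rw [Real.rpow_def_of_pos ht0, mul_comm (Real.log t) γ]; exact h.2
  refine ⟨γ, β, hγ0, hγβ, ⟨C₀⁻¹, C₀, inv_pos.mpr hC0, hC0, part1⟩, ?_⟩
  have hγne : (1:ℝ)/γ ≠ 0 := ne_of_gt (by positivity)
  have hβne : (1:ℝ)/β ≠ 0 := ne_of_gt (by positivity)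
  rcases Nat.eq_zero_or_pos n with h0 | hn
  · subst h0
    refine ⟨1, 1, 1, 1, one_pos, one_pos, one_pos, one_pos, fun x => ?_⟩
    have hx : x = 0 := PiLp.ext fun i => i.elim0
    have hnx : ‖x‖ = 0 := by rw [hx, norm_zero]
    constructor
    · intro _
      rw [hx, hφ0]
      constructor
      · rw [norm_zero, Real.zero_rpow hγne]; norm_num
      · rw [norm_zero, Real.zero_rpow hβne]; norm_num
    · intro h1
      rw [hnx] at h1; linarith
  haveI : Nontrivial (EuclideanSpace ℝ (Fin n)) := by
    refine ⟨EuclideanSpace.single ⟨0, hn⟩ (1 : ℝ), 0, fun h => ?_⟩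
    have := congrArg (fun v => v ⟨0, hn⟩) h
    simp [EuclideanSpace.single_apply] at this
  obtain ⟨ymin, hymin, hminOn⟩ := (isCompact_sphere (0:EuclideanSpace ℝ (Fin n)) 1).exists_isMinOn
    (NormedSpace.sphere_nonempty.mpr zero_le_one) hcont.continuousOn
  obtain ⟨ymax, hymax, hmaxOn⟩ := (isCompact_sphere (0:EuclideanSpace ℝ (Fin n)) 1).exists_isMaxOn
    (NormedSpace.sphere_nonempty.mpr zero_le_one) hcont.continuousOn
  set m := φ ymin with hm
  set M := φ ymax with hM
  have hymin_norm : ‖ymin‖ = 1 := by rwa [mem_sphere_zero_iff_norm] at hymin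
  have hm0 : 0 < m := hpos ymin (by
    intro h; rw [h, norm_zero] at hymin_norm; norm_num at hymin_norm)
  have hmM : m ≤ M := isMinOn_iff.mp hminOn ymax hymax
  have hM0 : 0 < M := lt_of_lt_of_le hm0 hmM
  have hφs : ∀ y : EuclideanSpace ℝ (Fin n), ‖y‖ = 1 → m ≤ φ y ∧ φ y ≤ M := fun y hy =>
    ⟨isMinOn_iff.mp hminOn y (mem_sphere_zero_iff_norm.mpr hy),
     isMaxOn_iff.mp hmaxOn y (mem_sphere_zero_iff_norm.mpr hy)⟩
  set D := C₀ ^ ((1:ℝ)/γ) with hD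
  set Dβ := C₀ ^ ((1:ℝ)/β) with hDβ
  have hD0 : 0 < D := Real.rpow_pos_of_pos hC0 _
  have hDβ0 : 0 < Dβ := Real.rpow_pos_of_pos hC0 _
  have hD1 : 1 ≤ D := by
    calc (1:ℝ) = 1 ^ ((1:ℝ)/γ) := (Real.one_rpow _).symm
      _ ≤ C₀ ^ ((1:ℝ)/γ) := Real.rpow_le_rpow zero_le_one hC1 (by positivity)
  have hDβ1 : 1 ≤ Dβ := by
    calc (1:ℝ) = 1 ^ ((1:ℝ)/β) := (Real.one_rpow _).symm
      _ ≤ C₀ ^ ((1:ℝ)/β) := Real.rpow_le_rpow zero_le_one hC1 (by positivity)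
  have hDβD : Dβ ≤ D := Real.rpow_le_rpow_of_exponent_le hC1 hβγ
  refine ⟨m / D, M * D, m / (D * Dβ), M * D, by positivity, by positivity, by positivity,
    by positivity, fun x => ?_⟩
  rcases eq_or_ne x 0 with rfl | hx
  · constructor
    · intro _
      rw [hφ0, norm_zero, Real.zero_rpow hγne, Real.zero_rpow hβne]
      norm_num
    · intro h1
      rw [norm_zero] at h1; linarith
  obtain ⟨s₀, hs₀⟩ := HGB.exists_s A hγ0 hC1 hmain x hx
  set y := mApply (NormedSpace.exp ((-s₀) • A)) x with hy
  have hy1 : ‖y‖ = 1 := hs₀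
  have hxy : mApply (NormedSpace.exp (s₀ • A)) y = x := HGB.mApply_exp_cancel A s₀ x
  set t := Real.exp s₀ with ht
  have ht0 : 0 < t := Real.exp_pos s₀
  have hr0 : 0 < ‖x‖ := norm_pos_iff.mpr hx
  have hφx : φ x = t * φ y := by
    have h := hhom t ht0 y
    have htexp : texp A t = NormedSpace.exp (s₀ • A) := by
      show NormedSpace.exp (Real.log t • A) = _
      rw [ht, Real.log_exp]
    rw [htexp, hxy] at h
    exact h
  have hyφ := hφs y hy1
  have hφ_ge : t * m ≤ φ x := by
    rw [hφx]
    exact mul_le_mul_of_nonneg_left hyφ.1 ht0.le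
  have hφ_le : φ x ≤ t * M := by
    rw [hφx]
    exact mul_le_mul_of_nonneg_left hyφ.2 ht0.le
  have hwin := hmain y s₀
  rw [hxy, hy1] at hwin
  have htγ : t ^ γ = Real.exp (γ * s₀) := by
    rw [Real.rpow_def_of_pos ht0, ht, Real.log_exp, mul_comm]
  have htβ : t ^ β = Real.exp (β * s₀) := by
    rw [Real.rpow_def_of_pos ht0, ht, Real.log_exp, mul_comm]
  have hdr : (‖x‖ / C₀) ^ ((1:ℝ)/γ) = ‖x‖ ^ ((1:ℝ)/γ) / D := by
    rw [hD, Real.div_rpow hr0.le hC0.le]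
  have hdrβ : (‖x‖ / C₀) ^ ((1:ℝ)/β) = ‖x‖ ^ ((1:ℝ)/β) / Dβ := by
    rw [hDβ, Real.div_rpow hr0.le hC0.le]
  have hmr : (C₀ * ‖x‖) ^ ((1:ℝ)/γ) = D * ‖x‖ ^ ((1:ℝ)/γ) := by
    rw [hD, Real.mul_rpow hC0.le hr0.le]
  have hmrβ : (C₀ * ‖x‖) ^ ((1:ℝ)/β) = Dβ * ‖x‖ ^ ((1:ℝ)/β) := by
    rw [hDβ, Real.mul_rpow hC0.le hr0.le]
  rcases le_total 0 s₀ with hs | hs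
  · -- t ≥ 1
    obtain ⟨hl, hu⟩ := hwin.1 hs
    rw [mul_one, ← htγ] at hl
    rw [mul_one, ← htβ] at hu
    have htlow : t ≤ (C₀ * ‖x‖) ^ ((1:ℝ)/γ) := HGB.t_le_of_low hC0 hγ0 ht0 hl
    have hthigh : (‖x‖ / C₀) ^ ((1:ℝ)/β) ≤ t := HGB.le_t_of_high hC0 hβ0 ht0 hr0.le hu
    refine ⟨fun hx1 => ⟨?_, ?_⟩, fun hx1 => ⟨?_, ?_⟩⟩
    · -- r ≤ 1, lower
      have h1 : (‖x‖ / C₀) ^ ((1:ℝ)/γ) ≤ (‖x‖ / C₀) ^ ((1:ℝ)/β) :=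
        Real.rpow_le_rpow_of_exponent_ge (by positivity)
          (by rw [div_le_one hC0]; linarith) hβγ
      have h2 : ‖x‖ ^ ((1:ℝ)/γ) / D ≤ t := by
        rw [← hdr]; exact h1.trans hthigh
      calc m / D * ‖x‖ ^ ((1:ℝ)/γ) = ‖x‖ ^ ((1:ℝ)/γ) / D * m := by ring
        _ ≤ t * m := mul_le_mul_of_nonneg_right h2 hm0.le
        _ ≤ φ x := hφ_ge
    · -- r ≤ 1, upper
      have h1 : ‖x‖ ^ ((1:ℝ)/γ) ≤ ‖x‖ ^ ((1:ℝ)/β) :=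
        Real.rpow_le_rpow_of_exponent_ge hr0 hx1 hβγ
      have h2 : t ≤ D * ‖x‖ ^ ((1:ℝ)/β) := by
        refine (htlow.trans_eq hmr).trans ?_
        exact mul_le_mul_of_nonneg_left h1 hD0.le
      calc φ x ≤ t * M := hφ_le
        _ ≤ D * ‖x‖ ^ ((1:ℝ)/β) * M := mul_le_mul_of_nonneg_right h2 hM0.le
        _ = M * D * ‖x‖ ^ ((1:ℝ)/β) := by ring
    · -- r ≥ 1, lower
      have h2 : ‖x‖ ^ ((1:ℝ)/β) / (D * Dβ) ≤ t := by
        refine le_trans ?_ (hdrβ ▸ hthigh)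
        apply div_le_div_of_nonneg_left (by positivity) hDβ0
        exact le_mul_of_one_le_left hDβ0.le hD1
      calc m / (D * Dβ) * ‖x‖ ^ ((1:ℝ)/β) = ‖x‖ ^ ((1:ℝ)/β) / (D * Dβ) * m := by ring
        _ ≤ t * m := mul_le_mul_of_nonneg_right h2 hm0.le
        _ ≤ φ x := hφ_ge
    · -- r ≥ 1, upper
      have h2 : t ≤ D * ‖x‖ ^ ((1:ℝ)/γ) := htlow.trans_eq hmr
      calc φ x ≤ t * M := hφ_le
        _ ≤ D * ‖x‖ ^ ((1:ℝ)/γ) * M := mul_le_mul_of_nonneg_right h2 hM0.le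
        _ = M * D * ‖x‖ ^ ((1:ℝ)/γ) := by ring
  · -- t ≤ 1
    obtain ⟨hl, hu⟩ := hwin.2 hs
    rw [mul_one, ← htβ] at hl
    rw [mul_one, ← htγ] at hu
    have ht1 : t ≤ 1 := by
      rw [ht, ← Real.exp_zero]
      exact Real.exp_le_exp.mpr hs
    have htlow : t ≤ (C₀ * ‖x‖) ^ ((1:ℝ)/β) := HGB.t_le_of_low hC0 hβ0 ht0 hl
    have hthigh : (‖x‖ / C₀) ^ ((1:ℝ)/γ) ≤ t := HGB.le_t_of_high hC0 hγ0 ht0 hr0.le hu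
    refine ⟨fun hx1 => ⟨?_, ?_⟩, fun hx1 => ⟨?_, ?_⟩⟩
    · -- r ≤ 1, lower
      have h2 : ‖x‖ ^ ((1:ℝ)/γ) / D ≤ t := hdr ▸ hthigh
      calc m / D * ‖x‖ ^ ((1:ℝ)/γ) = ‖x‖ ^ ((1:ℝ)/γ) / D * m := by ring
        _ ≤ t * m := mul_le_mul_of_nonneg_right h2 hm0.le
        _ ≤ φ x := hφ_ge
    · -- r ≤ 1, upper
      have h2 : t ≤ D * ‖x‖ ^ ((1:ℝ)/β) := by
        refine (htlow.trans_eq hmrβ).trans ?_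
        exact mul_le_mul_of_nonneg_right hDβD (by positivity)
      calc φ x ≤ t * M := hφ_le
        _ ≤ D * ‖x‖ ^ ((1:ℝ)/β) * M := mul_le_mul_of_nonneg_right h2 hM0.le
        _ = M * D * ‖x‖ ^ ((1:ℝ)/β) := by ring
    · -- r ≥ 1, lower
      have hrC : ‖x‖ ≤ C₀ := by
        have htγ1 : t ^ γ ≤ 1 := Real.rpow_le_one ht0.le ht1 hγ0.le
        calc ‖x‖ ≤ C₀ * t ^ γ := hu
          _ ≤ C₀ * 1 := mul_le_mul_of_nonneg_left htγ1 hC0.le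
          _ = C₀ := mul_one _
      have hrβ : ‖x‖ ^ ((1:ℝ)/β) ≤ Dβ := by
        rw [hDβ]
        exact Real.rpow_le_rpow hr0.le hrC (by positivity)
      have hinvD : 1 / D ≤ t := by
        have h1 : (1:ℝ) / C₀ ≤ ‖x‖ / C₀ := by gcongr
        have h2 : ((1:ℝ) / C₀) ^ ((1:ℝ)/γ) ≤ (‖x‖ / C₀) ^ ((1:ℝ)/γ) :=
          Real.rpow_le_rpow (by positivity) h1 (by positivity)
        have h3 : ((1:ℝ) / C₀) ^ ((1:ℝ)/γ) = 1 / D := by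
          rw [hD, Real.div_rpow zero_le_one hC0.le, Real.one_rpow]
        rw [← h3]
        exact h2.trans hthigh
      have h4 : ‖x‖ ^ ((1:ℝ)/β) / (D * Dβ) ≤ 1 / D := by
        rw [div_le_div_iff₀ (by positivity) hD0]
        calc ‖x‖ ^ ((1:ℝ)/β) * D ≤ Dβ * D := mul_le_mul_of_nonneg_right hrβ hD0.le
          _ = 1 * (D * Dβ) := by ring
      have h5 : ‖x‖ ^ ((1:ℝ)/β) / (D * Dβ) ≤ t := h4.trans hinvD
      calc m / (D * Dβ) * ‖x‖ ^ ((1:ℝ)/β) = ‖x‖ ^ ((1:ℝ)/β) / (D * Dβ) * m := by ring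
        _ ≤ t * m := mul_le_mul_of_nonneg_right h5 hm0.le
        _ ≤ φ x := hφ_ge
    · -- r ≥ 1, upper
      have h1 : (1:ℝ) ≤ ‖x‖ ^ ((1:ℝ)/γ) := by
        calc (1:ℝ) = 1 ^ ((1:ℝ)/γ) := (Real.one_rpow _).symm
          _ ≤ ‖x‖ ^ ((1:ℝ)/γ) := Real.rpow_le_rpow zero_le_one hx1 (by positivity)
      calc φ x ≤ t * M := hφ_le
        _ ≤ 1 * M := mul_le_mul_of_nonneg_right ht1 hM0.le
        _ = M := one_mul M
        _ ≤ M * D * ‖x‖ ^ ((1:ℝ)/γ) := by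
            rw [mul_assoc]
            refine le_mul_of_one_le_right hM0.le ?_
            calc (1:ℝ) = 1 * 1 := (one_mul 1).symm
              _ ≤ D * ‖x‖ ^ ((1:ℝ)/γ) := mul_le_mul hD1 h1 zero_le_one hD0.le
end
end
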